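/- [Lemma 4.5(i), algebraic form] Let (P_S) be a decomposition of Ω ∈ Λ and let m ∈ ℤ be such that every monomial x₁^{a₁}⋯x_n^{a_n} occurring in Ω with nonzero coefficient has total degree a₁+⋯+a_n ≡ m (mod 2). Then for every even-cardinality subset S, every monomial z₁^{d₁}⋯z_n^{d_n} occurring in P_S with nonzero coefficient has total degree d₁+⋯+d_n ≡ m (mod 2). -/

import Mathlib

/-!
Since `σ(x_i) = -x_i⁻¹`, we have `{x_i} = x_i - x_i⁻¹` and, for `|S|` even,
`{M_S} = x^{e_S} + x^{-e_S}`. The parity twist `τ : x^a ↦ (-1)^|a| x^a` negates every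
`x_i - x_i⁻¹` and fixes every `{M_S}`, so applying it to `Ω = (-1)^m τ(Ω)` produces a second
decomposition of `Ω`, with `(-1)^m P_S(-z)` in place of `P_S(z)`. Decompositions are unique,
which gives `P_S(-z) = (-1)^m P_S(z)`, i.e. the claim.

For uniqueness, let `ψ_E` invert and negate the variables indexed by `E`. Every `ψ_E` fixes the
`x_i - x_i⁻¹`, and the signed average `∑_E (-1)^|E ∩ S| ψ_E` kills `x^{e_T} + x^{-e_T}` unless
`S ⊆ T`, but not for `T = S`. Applied to a relation `∑_T {M_T} A_T = 0` at a maximal `S` with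
`A_S ≠ 0`, it gives a contradiction in the domain `Λ`. Finally the `x_i - x_i⁻¹` are
algebraically independent: `t ↦ t - t⁻¹` takes infinitely many rational values.
-/

noncomputable section

/-- The Laurent polynomial ring `Λ = ℚ[x₁^{±1},…,x_n^{±1}]`. -/
abbrev Lam (n : ℕ) : Type := AddMonoidAlgebra ℚ (Fin n →₀ ℤ)

/-- The variable `x_i ∈ Λ`. -/
def Xv {n : ℕ} (i : Fin n) : Lam n :=
  AddMonoidAlgebra.single (Finsupp.single i 1) 1

/-- The bracket `{f} := f + σ(f)`. -/
def bracket {n : ℕ} (σ : Lam n →+* Lam n) (f : Lam n) : Lam n := f + σ f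

/-- `σ` is the ring endomorphism of `Λ` determined by `σ(x_i) = −x_i⁻¹`,
i.e. `σ(x_i)·x_i = −1` for all `i`. -/
def IsSigma {n : ℕ} (σ : Lam n →+* Lam n) : Prop :=
  ∀ i : Fin n, σ (Xv i) * Xv i = -1

/-- The exponent vector of the alternating monomial
`M_S = x_{i₁} x_{i₂}⁻¹ ⋯ x_{i_{2k-1}} x_{i_{2k}}⁻¹`, where `S = {i₁ < ⋯ < i_{2k}}`. -/
def expS {n : ℕ} (S : Finset (Fin n)) : Fin n →₀ ℤ :=
  (((S.sort (· ≤ ·)).zipIdx).map fun p => Finsupp.single p.1 ((-1 : ℤ) ^ p.2)).sum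

/-- The alternating monomial `M_S ∈ Λ`. -/
def MS {n : ℕ} (S : Finset (Fin n)) : Lam n :=
  AddMonoidAlgebra.single (expS S) 1

/-- Evaluation of a polynomial `P ∈ ℚ[z₁,…,z_n]` at `z_i = {x_i}`. -/
def evalBr {n : ℕ} (σ : Lam n →+* Lam n) (P : MvPolynomial (Fin n) ℚ) : Lam n :=
  MvPolynomial.aeval (fun i => bracket σ (Xv i)) P

/-- A decomposition (4) of `Ω`: `Ω = Σ_S {M_S}·P_S({x₁},…,{x_n})`,
the sum being over the even-cardinality subsets `S` of the set of variables. -/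
def IsDecomposition {n : ℕ} (σ : Lam n →+* Lam n) (Ω : Lam n)
    (P : Finset (Fin n) → MvPolynomial (Fin n) ℚ) : Prop :=
  Ω = ∑ S ∈ Finset.univ.filter (fun S : Finset (Fin n) => Even S.card),
        bracket σ (MS S) * evalBr σ (P S)

open AddMonoidAlgebra Finset

lemma Finset.sum_eq_zero_of_insert_eq_neg {α M : Type*} [Fintype α] [DecidableEq α]
    [AddCommGroup M] {f : Finset α → M} (a : α) (h : ∀ s, a ∉ s → f (insert a s) = -f s) :
    ∑ s, f s = 0 := by
  rw [← powerset_univ, ← insert_erase (mem_univ a), sum_powerset_insert (notMem_erase a _),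
    ← sum_add_distrib]
  exact sum_eq_zero fun s hs => by
    rw [h s fun ha => notMem_erase a _ (mem_powerset.1 hs ha), add_neg_cancel]

lemma Int.natCast_modEq_of_negOnePow_smul_eq {K : Type*} [CommRing K] [IsDomain K] [CharZero K]
    {m : ℤ} {k : ℕ} {c : K} (hc : c ≠ 0) (h : m.negOnePow • c = (-1) ^ k * c) :
    (k : ℤ) ≡ m [ZMOD 2] := by
  rw [Units.smul_def, zsmul_eq_mul] at h
  have hsign : m.negOnePow = (k : ℤ).negOnePow := by
    apply Units.ext
    rw [Int.coe_negOnePow_natCast]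
    exact_mod_cast mul_right_cancel₀ hc h
  exact Int.modEq_iff_dvd.2 (even_iff_two_dvd.1 ((Int.negOnePow_eq_iff _ _).1 hsign))

section
open MvPolynomial

variable {σ R : Type*} [CommRing R]

lemma aeval_neg_X_monomial (e : σ →₀ ℕ) (c : R) :
    aeval (fun i => -X i) (monomial e c) = monomial e ((-1) ^ e.degree * c) := by
  have hprod : (e.prod fun i k => (-X i : MvPolynomial σ R) ^ k) =
      (-1) ^ e.degree * e.prod fun i k => X i ^ k := by
    simp_rw [neg_pow (X _ : MvPolynomial σ R)]
    rw [Finsupp.prod_mul, Finsupp.prod, prod_pow_eq_pow_sum, Finsupp.degree_apply]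
  rw [aeval_monomial, hprod, monomial_eq, C_mul, C_pow, C_neg, C_1, algebraMap_eq]
  ring

lemma coeff_aeval_neg_X (p : MvPolynomial σ R) (d : σ →₀ ℕ) :
    (aeval (fun i => -X i) p).coeff d = (-1) ^ d.degree * p.coeff d := by
  induction p using MvPolynomial.induction_on' with
  | monomial e c =>
    classical
    rw [aeval_neg_X_monomial, coeff_monomial, coeff_monomial]
    split_ifs with h
    · rw [h]
    · rw [mul_zero]
  | add p q hp hq => rw [map_add, MvPolynomial.coeff_add, MvPolynomial.coeff_add, hp, hq, mul_add]

end

section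
variable {α : Type*}

lemma list_sum_single_neg_one_pow_apply_eq_zero {l : List (α × ℕ)} {i : α}
    (h : i ∉ l.map Prod.fst) :
    (l.map fun p => Finsupp.single p.1 ((-1 : ℤ) ^ p.2)).sum i = 0 := by
  classical
  induction l with
  | nil => rfl
  | cons p l ih =>
    simp only [List.map_cons, List.mem_cons, not_or] at h
    simp [Ne.symm h.1, ih h.2]

lemma odd_list_sum_single_neg_one_pow_apply {l : List (α × ℕ)} {i : α}
    (hl : (l.map Prod.fst).Nodup) (h : i ∈ l.map Prod.fst) :
    Odd ((l.map fun p => Finsupp.single p.1 ((-1 : ℤ) ^ p.2)).sum i) := by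
  classical
  induction l with
  | nil => simp at h
  | cons p l ih =>
    simp only [List.map_cons, List.nodup_cons, List.mem_cons] at hl h
    simp only [List.map_cons, List.sum_cons, Finsupp.add_apply, Finsupp.single_apply]
    obtain rfl | hpi := eq_or_ne p.1 i
    · rw [if_pos rfl, list_sum_single_neg_one_pow_apply_eq_zero hl.1, add_zero]
      exact Odd.pow (by decide)
    · rw [if_neg hpi, zero_add]
      exact ih hl.2 (h.resolve_left (Ne.symm hpi))

end

section
variable {n : ℕ}

def degOn (E : Finset (Fin n)) : (Fin n →₀ ℤ) →+ ℤ := ∑ i ∈ E, Finsupp.applyAddHom i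

lemma degOn_apply (E : Finset (Fin n)) (a : Fin n →₀ ℤ) : degOn E a = ∑ i ∈ E, a i := by
  simp [degOn]

lemma degOn_single (E : Finset (Fin n)) (i : Fin n) (c : ℤ) :
    degOn E (Finsupp.single i c) = if i ∈ E then c else 0 := by
  simp [degOn_apply, Finsupp.single_apply]

lemma degOn_univ (a : Fin n →₀ ℤ) : degOn univ a = a.degree := by
  rw [degOn_apply, Finsupp.degree_eq_sum]

def flipOn (E : Finset (Fin n)) : (Fin n →₀ ℤ) →+ (Fin n →₀ ℤ) where
  toFun a := Finsupp.onFinset a.support (fun i => if i ∈ E then -a i else a i)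
    (fun i => by split_ifs <;> simp)
  map_zero' := by ext; simp
  map_add' a b := by ext; simp only [Finsupp.onFinset_apply, Finsupp.add_apply]; split_ifs <;> ring

lemma flipOn_apply (E : Finset (Fin n)) (a : Fin n →₀ ℤ) (i : Fin n) :
    flipOn E a i = if i ∈ E then -a i else a i := rfl

lemma flipOn_single (E : Finset (Fin n)) (i : Fin n) (c : ℤ) :
    flipOn E (Finsupp.single i c) = Finsupp.single i (if i ∈ E then -c else c) := by
  ext j
  rw [flipOn_apply]
  obtain rfl | hij := eq_or_ne i j <;> simp [*]

lemma flipOn_empty (a : Fin n →₀ ℤ) : flipOn ∅ a = a := by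
  ext i
  simp [flipOn_apply]

lemma flipOn_univ (a : Fin n →₀ ℤ) : flipOn univ a = -a := by
  ext i
  simp [flipOn_apply]

lemma flipOn_insert_of_apply_eq_zero {E : Finset (Fin n)} {a : Fin n →₀ ℤ} {i : Fin n}
    (ha : a i = 0) : flipOn (insert i E) a = flipOn E a := by
  ext j
  rw [flipOn_apply, flipOn_apply]
  obtain rfl | hj := eq_or_ne j i
  · simp [ha]
  · simp [mem_insert, hj]

/-- `signFlip E F` sends `x^a` to `(-1)^(∑ i ∈ E, a i) • x^a'`, where `a'` is `a` with the
coordinates in `F` negated. Thus `signFlip E E` is `x_i ↦ -x_i⁻¹` for `i ∈ E` (and `σ` is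
`signFlip univ univ`), while `signFlip univ ∅` is the parity twist `x^a ↦ (-1)^|a| x^a`. -/
def signFlip (E F : Finset (Fin n)) : Lam n →ₐ[ℚ] Lam n :=
  lift ℚ (Lam n) (Fin n →₀ ℤ)
    { toFun a := (degOn E a.toAdd).negOnePow • single (flipOn F a.toAdd) (1 : ℚ)
      map_one' := by simp [one_def]
      map_mul' a b := by
        simp only [toAdd_mul, map_add, Int.negOnePow_add]
        rw [smul_mul_smul_comm, single_mul_single, mul_one] }

lemma signFlip_single (E F : Finset (Fin n)) (a : Fin n →₀ ℤ) (c : ℚ) :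
    signFlip E F (single a c) = (degOn E a).negOnePow • single (flipOn F a) c := by
  rw [signFlip, lift_single]
  simp

lemma signFlip_Xv (E : Finset (Fin n)) (i : Fin n) :
    signFlip E E (Xv i) = if i ∈ E then -single (-Finsupp.single i 1) 1 else Xv i := by
  rw [Xv, signFlip_single, degOn_single, flipOn_single]
  split_ifs <;> simp [Units.neg_smul]

lemma IsSigma.eq_signFlip {σ : Lam n →+* Lam n} (hσ : IsSigma σ) :
    σ = (signFlip univ univ : Lam n →ₐ[ℚ] Lam n) := by
  ext : 1
  · exact Subsingleton.elim _ _
  · ext i : 1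
    apply MonoidHom.ext_mint
    show σ (Xv i) = signFlip univ univ (Xv i)
    have hinv : Xv i * single (-Finsupp.single i 1) 1 = 1 := by
      rw [Xv, single_mul_single, add_neg_cancel, mul_one, one_def]
    rw [signFlip_Xv, if_pos (mem_univ i), ← mul_one (σ (Xv i)), ← hinv, ← mul_assoc, hσ,
      neg_one_mul]

def monoAddInv (a : Fin n →₀ ℤ) : Lam n := single a 1 + single (-a) 1

def monoSubInv (a : Fin n →₀ ℤ) : Lam n := single a 1 - single (-a) 1

lemma monoSubInv_neg (a : Fin n →₀ ℤ) : monoSubInv (-a) = -monoSubInv a := by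
  simp [monoSubInv]

lemma signFlip_monoAddInv (E F : Finset (Fin n)) (a : Fin n →₀ ℤ) :
    signFlip E F (monoAddInv a) = (degOn E a).negOnePow • monoAddInv (flipOn F a) := by
  simp [monoAddInv, signFlip_single, smul_add]

lemma signFlip_monoSubInv (E F : Finset (Fin n)) (a : Fin n →₀ ℤ) :
    signFlip E F (monoSubInv a) = (degOn E a).negOnePow • monoSubInv (flipOn F a) := by
  simp [monoSubInv, signFlip_single, smul_sub]

lemma signFlip_monoSubInv_single_one (E F : Finset (Fin n)) (i : Fin n) :
    signFlip E F (monoSubInv (Finsupp.single i 1)) =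
      (if i ∈ E then -1 else 1) * (if i ∈ F then -1 else 1) *
        monoSubInv (Finsupp.single i 1) := by
  rw [signFlip_monoSubInv, degOn_single, flipOn_single]
  split_ifs <;> simp [Finsupp.single_neg, monoSubInv_neg, Units.neg_smul]

lemma expS_apply_of_notMem {S : Finset (Fin n)} {i : Fin n} (h : i ∉ S) : expS S i = 0 :=
  list_sum_single_neg_one_pow_apply_eq_zero (by simpa [List.zipIdx_map_fst] using h)

lemma odd_expS_apply {S : Finset (Fin n)} {i : Fin n} (h : i ∈ S) : Odd (expS S i) :=
  odd_list_sum_single_neg_one_pow_apply (by simp [List.zipIdx_map_fst, S.sort_nodup])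
    (by simpa [List.zipIdx_map_fst] using h)

lemma negOnePow_degOn_expS (E S : Finset (Fin n)) :
    (degOn E (expS S)).negOnePow = ((#(E ∩ S) : ℕ) : ℤ).negOnePow := by
  have hsum : degOn E (expS S) = ∑ i ∈ E ∩ S, expS S i := by
    rw [degOn_apply, ← filter_mem_eq_inter, sum_filter]
    exact sum_congr rfl fun i _ => by split_ifs with h <;> simp [expS_apply_of_notMem, h]
  rw [Int.negOnePow_eq_iff, hsum, card_eq_sum_ones, Nat.cast_sum, ← sum_sub_distrib]
  exact even_sum _ fun i hi => (odd_expS_apply (mem_inter.1 hi).2).sub_odd odd_one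

lemma signFlip_univ_empty_monoAddInv_expS {S : Finset (Fin n)} (hS : Even #S) :
    signFlip univ ∅ (monoAddInv (expS S)) = monoAddInv (expS S) := by
  rw [signFlip_monoAddInv, negOnePow_degOn_expS, univ_inter,
    Int.negOnePow_even _ (by exact_mod_cast hS), one_smul, flipOn_empty]

lemma signFlip_univ_empty_eq_negOnePow_smul {m : ℤ} {f : Lam n}
    (hf : ∀ a, f.coeff a ≠ 0 → a.degree ≡ m [ZMOD 2]) :
    signFlip univ ∅ f = m.negOnePow • f := by
  conv_lhs => rw [← sum_coeff_single f]
  conv_rhs => rw [← sum_coeff_single f]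
  rw [Finsupp.sum, map_sum, smul_sum]
  refine sum_congr rfl fun a ha => ?_
  have hdeg := (hf a (Finsupp.mem_support_iff.1 ha)).symm.dvd
  rw [signFlip_single, flipOn_empty, degOn_univ,
    (Int.negOnePow_eq_iff _ _).2 (even_iff_two_dvd.2 hdeg), smul_single]

def evalXSubInv : MvPolynomial (Fin n) ℚ →ₐ[ℚ] Lam n :=
  MvPolynomial.aeval fun i => monoSubInv (Finsupp.single i 1)

lemma signFlip_evalXSubInv (E : Finset (Fin n)) (p : MvPolynomial (Fin n) ℚ) :
    signFlip E E (evalXSubInv p) = evalXSubInv p := by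
  rw [evalXSubInv, MvPolynomial.comp_aeval_apply]
  refine congrArg (MvPolynomial.aeval · p) (funext fun i => ?_)
  rw [signFlip_monoSubInv_single_one]
  split_ifs <;> simp

lemma signFlip_univ_empty_evalXSubInv (p : MvPolynomial (Fin n) ℚ) :
    signFlip univ ∅ (evalXSubInv p) =
      evalXSubInv (MvPolynomial.aeval (fun i => -MvPolynomial.X i) p) := by
  rw [evalXSubInv, MvPolynomial.comp_aeval_apply, ← AlgHom.comp_apply, MvPolynomial.comp_aeval]
  refine congrArg (MvPolynomial.aeval · p) (funext fun i => ?_)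
  simp [signFlip_monoSubInv_single_one]

def evalUnits (t : Fin n → ℚˣ) : Lam n →ₐ[ℚ] ℚ :=
  lift ℚ ℚ (Fin n →₀ ℤ)
    { toFun a := ((a.toAdd.prod fun i k => t i ^ k : ℚˣ) : ℚ)
      map_one' := by simp
      map_mul' a b := by simp [Finsupp.prod_add_index', zpow_add] }

lemma evalUnits_evalXSubInv (t : Fin n → ℚˣ) (p : MvPolynomial (Fin n) ℚ) :
    evalUnits t (evalXSubInv p) = p.eval fun i => (t i : ℚ) - (t i)⁻¹ := by
  have hvar (i : Fin n) : evalUnits t (monoSubInv (Finsupp.single i 1)) = t i - (t i)⁻¹ := by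
    rw [evalUnits, monoSubInv, map_sub, lift_single, lift_single]
    simp [Finsupp.single_apply]
  rw [evalXSubInv, MvPolynomial.comp_aeval_apply]
  simp_rw [hvar]
  rfl

lemma evalXSubInv_injective : Function.Injective (evalXSubInv (n := n)) := by
  rw [injective_iff_map_eq_zero]
  intro p hp
  set g : ℕ → ℚ := fun k => (k + 1 : ℚ) - (k + 1 : ℚ)⁻¹
  have hg : StrictMono g := strictMono_nat_of_lt_succ fun k => by
    simp only [g]
    push_cast
    have : ((k : ℚ) + 1 + 1)⁻¹ < ((k : ℚ) + 1)⁻¹ := by gcongr; linarith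
    linarith
  refine MvPolynomial.funext_set (fun _ => Set.range g)
    (fun _ => Set.infinite_range_of_injective hg.injective) fun x hx => ?_
  choose k hk using Set.mem_univ_pi.1 hx
  have hpos (i : Fin n) : (k i + 1 : ℚ) ≠ 0 := by positivity
  have := evalUnits_evalXSubInv (fun i => Units.mk0 _ (hpos i)) p
  simp only [hp, map_zero, Units.val_inv_eq_inv_val, Units.val_mk0] at this
  rw [map_zero, ← funext hk, this]

def signProj (S : Finset (Fin n)) : Lam n →+ Lam n :=
  ∑ E : Finset (Fin n), ((#(E ∩ S) : ℕ) : ℤ).negOnePow • (signFlip E E : Lam n →+ Lam n)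

lemma signProj_apply (S : Finset (Fin n)) (f : Lam n) :
    signProj S f =
      ∑ E : Finset (Fin n), ((#(E ∩ S) : ℕ) : ℤ).negOnePow • signFlip E E f := by
  simp [signProj]

lemma signProj_mul {a : Lam n} (ha : ∀ E, signFlip E E a = a) (S : Finset (Fin n)) (f : Lam n) :
    signProj S (f * a) = signProj S f * a := by
  simp only [signProj_apply, map_mul, ha, sum_mul, smul_mul_assoc]

lemma signProj_monoAddInv_expS (S S' : Finset (Fin n)) :
    signProj S (monoAddInv (expS S')) = ∑ E : Finset (Fin n),
      ((#(E ∩ S) : ℕ) : ℤ).negOnePow • ((#(E ∩ S') : ℕ) : ℤ).negOnePow •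
        monoAddInv (flipOn E (expS S')) := by
  simp only [signProj_apply, signFlip_monoAddInv, negOnePow_degOn_expS]

lemma signProj_monoAddInv_expS_of_not_subset {S S' : Finset (Fin n)} (h : ¬S ⊆ S') :
    signProj S (monoAddInv (expS S')) = 0 := by
  obtain ⟨i, hiS, hiS'⟩ := not_subset.1 h
  rw [signProj_monoAddInv_expS]
  refine sum_eq_zero_of_insert_eq_neg i fun E hiE => ?_
  rw [insert_inter_of_mem hiS, insert_inter_of_notMem hiS', card_insert_of_notMem (by simp [hiE]),
    flipOn_insert_of_apply_eq_zero (expS_apply_of_notMem hiS'), Nat.cast_succ,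
    Int.negOnePow_succ, Units.neg_smul]

lemma signProj_monoAddInv_expS_self_ne_zero (S : Finset (Fin n)) :
    signProj S (monoAddInv (expS S)) ≠ 0 := by
  intro h
  rw [signProj_monoAddInv_expS] at h
  -- the augmentation `x^a ↦ 1` takes the value `2 ^ (n + 1)`
  have := congrArg (lift ℚ ℚ (Fin n →₀ ℤ) 1) h
  simp [monoAddInv, smul_smul] at this

theorem eq_zero_of_sum_monoAddInv_expS_mul_eq_zero {𝒮 : Finset (Finset (Fin n))}
    {A : Finset (Fin n) → Lam n} (hA : ∀ S ∈ 𝒮, ∀ E, signFlip E E (A S) = A S)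
    (h : ∑ S ∈ 𝒮, monoAddInv (expS S) * A S = 0) : ∀ S ∈ 𝒮, A S = 0 := by
  by_contra! hne
  obtain ⟨S, hSmax⟩ :=
    ({S ∈ 𝒮 | A S ≠ 0} : Finset _).exists_maximal (by simpa [Finset.Nonempty] using hne)
  obtain ⟨hS𝒮, hAS⟩ := mem_filter.1 hSmax.prop
  have hproj := congrArg (signProj S) h
  rw [map_sum, map_zero, sum_eq_single_of_mem S hS𝒮] at hproj
  · rw [signProj_mul (hA S hS𝒮)] at hproj
    exact hAS ((mul_eq_zero.1 hproj).resolve_left (signProj_monoAddInv_expS_self_ne_zero S))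
  · intro S' hS' hne
    rw [signProj_mul (hA S' hS')]
    by_cases hsub : S ⊆ S'
    · have : A S' = 0 := by
        by_contra hAS'
        exact hSmax.not_gt (mem_filter.2 ⟨hS', hAS'⟩) (ssubset_of_subset_of_ne hsub hne.symm)
      rw [this, mul_zero]
    · rw [signProj_monoAddInv_expS_of_not_subset hsub, zero_mul]

theorem eq_zero_of_sum_monoAddInv_expS_mul_evalXSubInv_eq_zero {𝒮 : Finset (Finset (Fin n))}
    {Q : Finset (Fin n) → MvPolynomial (Fin n) ℚ}
    (h : ∑ S ∈ 𝒮, monoAddInv (expS S) * evalXSubInv (Q S) = 0) : ∀ S ∈ 𝒮, Q S = 0 :=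
  fun S hS => evalXSubInv_injective.eq_iff' (map_zero _) |>.1 <|
    eq_zero_of_sum_monoAddInv_expS_mul_eq_zero (fun S _ E => signFlip_evalXSubInv E (Q S)) h S hS

variable {σ : Lam n →+* Lam n}

lemma IsSigma.bracket_Xv (hσ : IsSigma σ) (i : Fin n) :
    bracket σ (Xv i) = monoSubInv (Finsupp.single i 1) := by
  rw [bracket, hσ.eq_signFlip, AlgHom.coe_toRingHom, signFlip_Xv, if_pos (mem_univ i), monoSubInv,
    Xv, sub_eq_add_neg]

lemma IsSigma.evalBr_eq (hσ : IsSigma σ) (p : MvPolynomial (Fin n) ℚ) :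
    evalBr σ p = evalXSubInv p := by
  simp only [evalBr, evalXSubInv, hσ.bracket_Xv]

lemma IsSigma.bracket_MS (hσ : IsSigma σ) {S : Finset (Fin n)} (hS : Even #S) :
    bracket σ (MS S) = monoAddInv (expS S) := by
  rw [bracket, hσ.eq_signFlip, AlgHom.coe_toRingHom, MS, monoAddInv, signFlip_single,
    negOnePow_degOn_expS, univ_inter, Int.negOnePow_even _ (by exact_mod_cast hS), one_smul,
    flipOn_univ]

lemma IsDecomposition.eq_sum {Ω : Lam n} {P : Finset (Fin n) → MvPolynomial (Fin n) ℚ}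
    (hσ : IsSigma σ) (hP : IsDecomposition σ Ω P) :
    Ω = ∑ S ∈ univ.filter (fun S : Finset (Fin n) => Even #S),
      monoAddInv (expS S) * evalXSubInv (P S) :=
  hP.trans <| sum_congr rfl fun S hS => by
    rw [hσ.bracket_MS (mem_filter.1 hS).2, hσ.evalBr_eq]

end

theorem decomposition_totalDegree_parity_general (n : ℕ)
    (σ : Lam n →+* Lam n) (hσ : IsSigma σ)
    (Ω : Lam n) (P : Finset (Fin n) → MvPolynomial (Fin n) ℚ)
    (hP : IsDecomposition σ Ω P) (m : ℤ)
    (hΩ : ∀ a : Fin n →₀ ℤ, (Ω.coeff : (Fin n →₀ ℤ) →₀ ℚ) a ≠ 0 →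
      (a.sum fun _ v => v) ≡ m [ZMOD 2]) :
    ∀ S : Finset (Fin n), Even S.card →
      ∀ d : Fin n →₀ ℕ, (P S).coeff d ≠ 0 →
        ((d.sum fun _ v => v : ℕ) : ℤ) ≡ m [ZMOD 2] := by
  intro S hS d hd
  set negX : MvPolynomial (Fin n) ℚ →ₐ[ℚ] MvPolynomial (Fin n) ℚ :=
    MvPolynomial.aeval fun i => -MvPolynomial.X i
  have hΩsum := hP.eq_sum hσ
  have hτ : signFlip univ ∅ Ω = ∑ S ∈ univ.filter (fun S : Finset (Fin n) => Even #S),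
      monoAddInv (expS S) * evalXSubInv (negX (P S)) := by
    rw [hΩsum, map_sum]
    exact sum_congr rfl fun S hS => by
      rw [map_mul, signFlip_univ_empty_monoAddInv_expS (mem_filter.1 hS).2,
        signFlip_univ_empty_evalXSubInv]
  have hzero : ∑ S ∈ univ.filter (fun S : Finset (Fin n) => Even #S),
      monoAddInv (expS S) * evalXSubInv (m.negOnePow • P S - negX (P S)) = 0 := by
    simp only [map_sub, Units.smul_def, map_zsmul, mul_sub, mul_smul_comm, sum_sub_distrib,
      ← smul_sum, ← hΩsum, ← hτ, signFlip_univ_empty_eq_negOnePow_smul hΩ, sub_self]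
  have hPS := eq_zero_of_sum_monoAddInv_expS_mul_evalXSubInv_eq_zero hzero S (by simpa using hS)
  have hcoeff := congrArg (MvPolynomial.coeff d) hPS
  rw [MvPolynomial.coeff_sub, MvPolynomial.coeff_smul, coeff_aeval_neg_X, MvPolynomial.coeff_zero,
    sub_eq_zero] at hcoeff
  exact Int.natCast_modEq_of_negOnePow_smul_eq hd hcoeff

/-- Lemma 4.5(i), algebraic form: if every monomial of `Ω` has total degree `≡ m (mod 2)`,
then every monomial of each `P_S` (for `S` of even cardinality) has total degree `≡ m (mod 2)`. -/
theorem decomposition_totalDegree_parity (n : ℕ) (hn : 1 ≤ n)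
    (σ : Lam n →+* Lam n) (hσ : IsSigma σ)
    (Ω : Lam n) (P : Finset (Fin n) → MvPolynomial (Fin n) ℚ)
    (hP : IsDecomposition σ Ω P) (m : ℤ)
    (hΩ : ∀ a : Fin n →₀ ℤ, (Ω.coeff : (Fin n →₀ ℤ) →₀ ℚ) a ≠ 0 →
      (a.sum fun _ v => v) ≡ m [ZMOD 2]) :
    ∀ S : Finset (Fin n), Even S.card →
      ∀ d : Fin n →₀ ℕ, (P S).coeff d ≠ 0 →
        ((d.sum fun _ v => v : ℕ) : ℤ) ≡ m [ZMOD 2] :=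
  decomposition_totalDegree_parity_general n σ hσ Ω P hP m hΩ

end
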